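/- Let 0 < α, β < 1 with α + β < 1, and let Λ = {λ_k} be an increasing sequence of positive numbers with λ₁ > 1 and λ_k → ∞ such that λ_k / k^{1−(α+β)} decreases to 0. For an integer N ≥ 5, set t_j := (Σ_{i=1}^{j} 1/λ_i)^{−1}, let A_{i,j} be the rectangle [ (πi − απ/2)/(N + 1/2 − α/2), (π(i+1) − απ/2)/(N + 1/2 − α/2) ) × [ (πj − βπ/2)/(N + 1/2 − β/2), (π(j+1) − βπ/2)/(N + 1/2 − β/2) ), let W := { (i,j) : j < i < 2j, 1 < j < (N−1)/2 }, and define f_N(x,y) := Σ_{(i,j)∈W} t_j · 1_{A_{i,j}}(x,y) · sin[(N + 1/2 − α/2)x + απ/2] · sin[(N + 1/2 − β/2)y + βπ/2]. Then there is a constant c > 0 independent of N such that ΛV₁(f_N) ≤ c and ΛV₂(f_N) ≤ c; in particular f_N ∈ PΛBV with PΛV(f_N) bounded uniformly in N. -/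

import Mathlib

/-!
For fixed `y`, `x ↦ f_N(x, y)` is a wave `σ(x) · sin(θx + απ/2)`, `θ = N + 1/2 - α/2`, whose
amplitude `σ` is constant on the cells between consecutive zeros of the sine. If the line through
`y` meets the support in the row `j₀`, then `|σ| ≤ t_K` and `σ` lives on a `θ`-length
`π(K - 1)`, with `K = j₀`; for fixed `x` in the column `i₀` the same holds in `y` with
`K = ⌊i₀/2⌋ + 1`, because `t_j` decreases. Such a wave is `t_K θ`-Lipschitz and bounded by `t_K`,
so an interval changes it by at most `t_K · min(2, θ · |part of the interval within 2/θ of the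
support|)`, and over nonoverlapping intervals these bounds add up to at most `6K · t_K`. As
`1/λ_k` decreases, the `Λ`-weighted sum is largest when this mass sits on the first `K` weights,
which gives `6 t_K Σ_{k ≤ K} 1/λ_k = 6`.
-/

open MeasureTheory Filter Finset

noncomputable section

/-- Cesàro numbers `A_k^γ = (γ+1)⋯(γ+k)/k!`. -/
def cesaroA (γ : ℝ) (k : ℕ) : ℝ :=
  (∏ i ∈ Finset.range k, (γ + (i + 1))) / (Nat.factorial k)

/-- Fourier coefficients of a function of two variables. -/
def fourierCoef2 (f : ℝ → ℝ → ℝ) (m n : ℤ) : ℂ :=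
  (1 / (4 * (Real.pi : ℂ) ^ 2)) *
    ∫ x in (0:ℝ)..(2 * Real.pi), ∫ y in (0:ℝ)..(2 * Real.pi),
      (f x y : ℂ) * Complex.exp (-Complex.I * m * x) * Complex.exp (-Complex.I * n * y)

/-- Rectangular partial sums of the double trigonometric Fourier series. -/
def partialSum2 (f : ℝ → ℝ → ℝ) (M N : ℕ) (x y : ℝ) : ℂ :=
  ∑ m ∈ Finset.Icc (-(M:ℤ)) (M:ℤ), ∑ n ∈ Finset.Icc (-(N:ℤ)) (N:ℤ),
    fourierCoef2 f m n * Complex.exp (Complex.I * m * x) * Complex.exp (Complex.I * n * y)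

/-- Cesàro `(C; -α, -β)` means of the double Fourier series of `f`. -/
def cesaroMean2 (α β : ℝ) (f : ℝ → ℝ → ℝ) (m n : ℕ) (x y : ℝ) : ℂ :=
  ((1 / (cesaroA (-α) m * cesaroA (-β) n) : ℝ) : ℂ) *
    ∑ i ∈ Finset.range (m+1), ∑ j ∈ Finset.range (n+1),
      ((cesaroA (-α - 1) (m - i) * cesaroA (-β - 1) (n - j) : ℝ) : ℂ) * partialSum2 f i j x y

/-- A finite collection of pairwise nonoverlapping intervals in `[0, 2π]`. -/
def Nonoverlapping (n : ℕ) (I : Fin n → ℝ × ℝ) : Prop :=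
  (∀ i, 0 ≤ (I i).1 ∧ (I i).1 < (I i).2 ∧ (I i).2 ≤ 2 * Real.pi) ∧
  Pairwise fun i j => Set.Ioo (I i).1 (I i).2 ∩ Set.Ioo (I j).1 (I j).2 = ∅

/-- All sums `Σ |f(I_i, y)|/λ_i` appearing in the definition of `ΛV₁(f)`. -/
def V1sums (lam : ℕ → ℝ) (f : ℝ → ℝ → ℝ) : Set ℝ :=
  {v | ∃ (y : ℝ) (n : ℕ) (I : Fin n → ℝ × ℝ), Nonoverlapping n I ∧
    v = ∑ i : Fin n, |f (I i).2 y - f (I i).1 y| / lam ((i : ℕ) + 1)}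

/-- All sums `Σ |f(x, J_j)|/λ_j` appearing in the definition of `ΛV₂(f)`. -/
def V2sums (lam : ℕ → ℝ) (f : ℝ → ℝ → ℝ) : Set ℝ :=
  {v | ∃ (x : ℝ) (n : ℕ) (J : Fin n → ℝ × ℝ), Nonoverlapping n J ∧
    v = ∑ j : Fin n, |f x (J j).2 - f x (J j).1| / lam ((j : ℕ) + 1)}

/-- `f` has bounded partial `Λ`-variation. -/
def PLambdaBV (lam : ℕ → ℝ) (f : ℝ → ℝ → ℝ) : Prop :=
  BddAbove (V1sums lam f) ∧ BddAbove (V2sums lam f)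

/-- `t_j = (Σ_{i=1}^j 1/λ_i)⁻¹`. -/
def tcoef (lam : ℕ → ℝ) (j : ℕ) : ℝ := (∑ i ∈ Finset.Icc 1 j, 1 / lam i)⁻¹

/-- The rectangle `A_{i,j}` from the construction of the counterexample. -/
def rectA (α β : ℝ) (N i j : ℕ) : Set (ℝ × ℝ) :=
  (Set.Ico ((Real.pi * i - α * Real.pi / 2) / ((N : ℝ) + 1/2 - α/2))
           ((Real.pi * (i+1) - α * Real.pi / 2) / ((N : ℝ) + 1/2 - α/2))) ×ˢ
  (Set.Ico ((Real.pi * j - β * Real.pi / 2) / ((N : ℝ) + 1/2 - β/2))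
           ((Real.pi * (j+1) - β * Real.pi / 2) / ((N : ℝ) + 1/2 - β/2)))

/-- The function `f_N` from the construction of the counterexample. -/
def fN (α β : ℝ) (lam : ℕ → ℝ) (N : ℕ) (x y : ℝ) : ℝ :=
  ∑ i ∈ Finset.range N, ∑ j ∈ Finset.range N,
    if j < i ∧ i < 2 * j ∧ 1 < j ∧ 2 * j + 1 < N then
      tcoef lam j * Set.indicator (rectA α β N i j) (fun _ => (1:ℝ)) (x, y) *
        Real.sin (((N : ℝ) + 1/2 - α/2) * x + α * Real.pi / 2) *
        Real.sin (((N : ℝ) + 1/2 - β/2) * y + β * Real.pi / 2)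
    else 0

theorem sum_mul_le_of_antitone {u b : ℕ → ℝ} {M : ℝ} {n K : ℕ} (hu : Antitone u)
    (hu0 : ∀ k, 0 ≤ u k) (hb0 : ∀ i, 0 ≤ b i) (hbM : ∀ i, b i ≤ M)
    (hsum : ∑ i ∈ range n, b i ≤ M * K) :
    ∑ i ∈ range n, b i * u i ≤ M * ∑ k ∈ range K, u k := by
  rcases le_total n K with hnK | hKn
  · calc ∑ i ∈ range n, b i * u i ≤ ∑ i ∈ range n, M * u i :=
          sum_le_sum fun i _ => mul_le_mul_of_nonneg_right (hbM i) (hu0 i)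
      _ ≤ ∑ k ∈ range K, M * u k :=
          sum_le_sum_of_subset_of_nonneg (range_subset_range.2 hnK)
            fun i _ _ => mul_nonneg ((hb0 i).trans (hbM i)) (hu0 i)
      _ = M * ∑ k ∈ range K, u k := (mul_sum _ _ _).symm
  · -- the mass `b i` sitting beyond `K` is moved down to the larger weights `u i`, `i < K`
    have head : ∀ i ∈ range K, b i * u i ≤ M * u i + u K * (b i - M) := fun i hi => by
      have : u K ≤ u i := hu (mem_range.1 hi).le
      nlinarith [hbM i]
    have tail : ∀ i ∈ Ico K n, b i * u i ≤ u K * b i := fun i hi => by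
      have : u i ≤ u K := hu (mem_Ico.1 hi).1
      nlinarith [hb0 i]
    rw [← sum_range_add_sum_Ico _ hKn] at hsum ⊢
    have := mul_le_mul_of_nonneg_left hsum (hu0 K)
    calc ∑ i ∈ range K, b i * u i + ∑ i ∈ Ico K n, b i * u i
        ≤ ∑ i ∈ range K, (M * u i + u K * (b i - M)) + ∑ i ∈ Ico K n, u K * b i :=
          add_le_add (sum_le_sum head) (sum_le_sum tail)
      _ = M * ∑ k ∈ range K, u k
            + (u K * (∑ i ∈ range K, b i + ∑ i ∈ Ico K n, b i) - u K * (M * K)) := by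
          simp only [sum_add_distrib, ← mul_sum, sum_sub_distrib, sum_const, card_range,
            nsmul_eq_mul]
          ring
      _ ≤ M * ∑ k ∈ range K, u k := by linarith

theorem sum_measureReal_inter_le {ι α : Type*} [Fintype ι] [MeasurableSpace α]
    {μ : Measure α} {S : ι → Set α} (hS : Pairwise fun i j => Disjoint (S i) (S j))
    (hSm : ∀ i, MeasurableSet (S i)) {J : Set α} (hJm : MeasurableSet J) (hJ : μ J ≠ ⊤) :
    ∑ i, μ.real (S i ∩ J) ≤ μ.real J := by
  rw [← measureReal_iUnion_fintype (f := fun i => S i ∩ J)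
    (fun i j hij => (hS hij).mono Set.inter_subset_left Set.inter_subset_left)
    (fun i => (hSm i).inter hJm) (fun i => measure_ne_top_of_subset Set.inter_subset_right hJ)]
  exact measureReal_mono (Set.iUnion_subset fun i => Set.inter_subset_right) hJ

theorem min_le_volume_real_Ioo_inter {a b s e δ : ℝ} (hδ : 0 ≤ δ)
    (h : a ∈ Set.Icc s e ∨ b ∈ Set.Icc s e) :
    min (b - a) δ ≤ volume.real (Set.Ioo a b ∩ Set.Ioo (s - δ) (e + δ)) := by
  rw [Set.Ioo_inter_Ioo, Real.volume_real_Ioo]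
  refine le_max_of_le_left ?_
  have := min_le_left (b - a) δ
  have := min_le_right (b - a) δ
  rcases h with ⟨h1, h2⟩ | ⟨h1, h2⟩ <;>
    rcases max_cases a (s - δ) with ⟨h3, h4⟩ | ⟨h3, h4⟩ <;>
    rcases min_cases b (e + δ) with ⟨h5, h6⟩ | ⟨h5, h6⟩ <;>
    linarith

def IsConstBetweenNodes (w : ℕ → ℝ) (σ : ℝ → ℝ) : Prop :=
  ∀ a b, a ≤ b → (∀ k, w k ∉ Set.Ioc a b) → σ a = σ b

theorem IsConstBetweenNodes.mul_const {w : ℕ → ℝ} {σ : ℝ → ℝ} (hσ : IsConstBetweenNodes w σ)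
    (c : ℝ) : IsConstBetweenNodes w fun z => σ z * c :=
  fun a b hab hw => congrArg (· * c) (hσ a b hab hw)

section Wave

variable {σ h : ℝ → ℝ} {w : ℕ → ℝ} {T θ : ℝ}

theorem abs_mul_le_of_eq_zero (hT : ∀ z, |σ z| ≤ T)
    (hlip : ∀ a b, |h b - h a| ≤ θ * |b - a|) {z₀ : ℝ} (hz₀ : h z₀ = 0) (z : ℝ) :
    |σ z * h z| ≤ T * (θ * |z - z₀|) := by
  rw [abs_mul, ← sub_zero (h z), ← hz₀]
  exact mul_le_mul (hT z) (hlip z₀ z) (abs_nonneg _) ((abs_nonneg _).trans (hT z))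

theorem abs_mul_sub_mul_le (hσ : IsConstBetweenNodes w σ) (hT : ∀ z, |σ z| ≤ T)
    (hlip : ∀ a b, |h b - h a| ≤ θ * |b - a|) (hw : ∀ k, h (w k) = 0) {a b : ℝ} (hab : a ≤ b) :
    |σ b * h b - σ a * h a| ≤ T * (θ * (b - a)) := by
  by_cases hnode : ∃ k, w k ∈ Set.Ioc a b
  · obtain ⟨k, hka, hkb⟩ := hnode
    have hb := abs_mul_le_of_eq_zero hT hlip (hw k) b
    have ha := abs_mul_le_of_eq_zero hT hlip (hw k) a
    rw [abs_of_nonneg (sub_nonneg.2 hkb)] at hb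
    rw [abs_of_neg (sub_neg.2 hka)] at ha
    calc |σ b * h b - σ a * h a| ≤ |σ b * h b| + |σ a * h a| := abs_sub _ _
      _ ≤ T * (θ * (b - w k)) + T * (θ * -(a - w k)) := add_le_add hb ha
      _ = T * (θ * (b - a)) := by ring
  · push Not at hnode
    rw [← hσ a b hab hnode, ← mul_sub, abs_mul, ← abs_of_nonneg (sub_nonneg.2 hab)]
    exact mul_le_mul (hT a) (hlip a b) (abs_nonneg _) ((abs_nonneg _).trans (hT a))

theorem abs_mul_sub_mul_le_min (hσ : IsConstBetweenNodes w σ) (hT : ∀ z, |σ z| ≤ T)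
    (hh : ∀ z, |h z| ≤ 1) (hlip : ∀ a b, |h b - h a| ≤ θ * |b - a|) (hw : ∀ k, h (w k) = 0)
    {a b : ℝ} (hab : a ≤ b) :
    |σ b * h b - σ a * h a| ≤ T * min 2 (θ * (b - a)) := by
  have hbound : ∀ z, |σ z * h z| ≤ T := fun z => by
    rw [abs_mul]
    simpa using mul_le_mul (hT z) (hh z) (abs_nonneg _) ((abs_nonneg _).trans (hT z))
  rw [mul_min_of_nonneg _ _ ((abs_nonneg _).trans (hT 0))]
  refine le_min ?_ (abs_mul_sub_mul_le hσ hT hlip hw hab)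
  linarith [abs_sub (σ b * h b) (σ a * h a), hbound a, hbound b]

theorem abs_mul_sub_mul_le_volume (hσ : IsConstBetweenNodes w σ) (hT : ∀ z, |σ z| ≤ T)
    (hh : ∀ z, |h z| ≤ 1) (hlip : ∀ a b, |h b - h a| ≤ θ * |b - a|) (hw : ∀ k, h (w k) = 0)
    (hθ : 0 < θ) {s e : ℝ} (hsupp : ∀ z, σ z ≠ 0 → z ∈ Set.Icc s e) {a b : ℝ} (hab : a ≤ b) :
    |σ b * h b - σ a * h a| ≤
      T * min 2 (θ * volume.real (Set.Ioo a b ∩ Set.Ioo (s - 2 / θ) (e + 2 / θ))) := by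
  have hT0 : 0 ≤ T := (abs_nonneg _).trans (hT 0)
  by_cases hmeet : a ∈ Set.Icc s e ∨ b ∈ Set.Icc s e
  · refine (abs_mul_sub_mul_le_min hσ hT hh hlip hw hab).trans
      (mul_le_mul_of_nonneg_left (le_min (min_le_left _ _) ?_) hT0)
    calc min 2 (θ * (b - a)) = θ * min (b - a) (2 / θ) := by
          rw [mul_min_of_nonneg _ _ hθ.le, mul_div_cancel₀ _ hθ.ne', min_comm]
      _ ≤ _ := mul_le_mul_of_nonneg_left
          (min_le_volume_real_Ioo_inter (div_nonneg zero_le_two hθ.le) hmeet) hθ.le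
  · push Not at hmeet
    rw [not_imp_comm.1 (hsupp a) hmeet.1, not_imp_comm.1 (hsupp b) hmeet.2]
    simp only [zero_mul, sub_zero, abs_zero]
    exact mul_nonneg hT0 (le_min zero_le_two (mul_nonneg hθ.le measureReal_nonneg))

end Wave

theorem antitone_inv_of_monotone {lam : ℕ → ℝ} (hpos : ∀ k, 1 ≤ k → 0 < lam k)
    (hmono : ∀ k, 1 ≤ k → lam k ≤ lam (k + 1)) : Antitone fun k => (lam (k + 1))⁻¹ :=
  antitone_nat_of_succ_le fun k => inv_anti₀ (hpos _ k.succ_pos) (hmono _ k.succ_pos)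

theorem sum_abs_mul_sub_mul_div_le {σ h : ℝ → ℝ} {w : ℕ → ℝ} {T θ s e : ℝ} {K : ℕ}
    {lam : ℕ → ℝ} (hpos : ∀ k, 1 ≤ k → 0 < lam k) (hmono : ∀ k, 1 ≤ k → lam k ≤ lam (k + 1))
    (hσ : IsConstBetweenNodes w σ) (hT : ∀ z, |σ z| ≤ T)
    (hh : ∀ z, |h z| ≤ 1) (hlip : ∀ a b, |h b - h a| ≤ θ * |b - a|) (hw : ∀ k, h (w k) = 0)
    (hθ : 0 < θ) (hsupp : ∀ z, σ z ≠ 0 → z ∈ Set.Icc s e) (hlen : θ * (e - s) + 4 ≤ 6 * K)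
    {n : ℕ} {I : Fin n → ℝ × ℝ} (hI : Nonoverlapping n I) :
    ∑ i : Fin n, |σ (I i).2 * h (I i).2 - σ (I i).1 * h (I i).1| / lam (i + 1) ≤
      6 * (T * ∑ k ∈ range K, (lam (k + 1))⁻¹) := by
  set J := Set.Ioo (s - 2 / θ) (e + 2 / θ)
  set ℓ : Fin n → ℝ := fun i => volume.real (Set.Ioo (I i).1 (I i).2 ∩ J)
  set B : ℕ → ℝ := fun m => if hm : m < n then min 2 (θ * ℓ ⟨m, hm⟩) else 0
  have hT0 : 0 ≤ T := (abs_nonneg _).trans (hT 0)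
  have hB : ∀ i : Fin n, B i = min 2 (θ * ℓ i) := fun i => dif_pos i.isLt
  have hB0 : ∀ m, 0 ≤ B m := fun m => by
    unfold B; split_ifs
    exacts [le_min zero_le_two (mul_nonneg hθ.le measureReal_nonneg), le_rfl]
  have hB6 : ∀ m, B m ≤ 6 := fun m => by
    unfold B; split_ifs
    exacts [(min_le_left _ _).trans (by norm_num), by norm_num]
  have hℓ : ∑ i, ℓ i ≤ volume.real J :=
    sum_measureReal_inter_le
      (fun i j hij => Set.disjoint_iff_inter_eq_empty.2 (hI.2 hij))
      (fun i => measurableSet_Ioo) measurableSet_Ioo measure_Ioo_lt_top.ne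
  have hBsum : ∑ m ∈ range n, B m ≤ 6 * K := by
    rw [sum_range]
    calc ∑ i : Fin n, B i ≤ ∑ i, θ * ℓ i := sum_le_sum fun i _ => (hB i).trans_le (min_le_right _ _)
      _ ≤ θ * volume.real J := by rw [← mul_sum]; exact mul_le_mul_of_nonneg_left hℓ hθ.le
      _ = max (θ * (e - s) + 4) 0 := by
          rw [Real.volume_real_Ioo, mul_max_of_nonneg _ _ hθ.le]
          field_simp
          ring_nf
      _ ≤ 6 * K := max_le hlen (by positivity)
  calc ∑ i : Fin n, |σ (I i).2 * h (I i).2 - σ (I i).1 * h (I i).1| / lam (i + 1)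
      ≤ ∑ i : Fin n, T * (B i * (lam (i + 1))⁻¹) := by
        refine sum_le_sum fun i _ => ?_
        rw [div_eq_mul_inv, ← mul_assoc, hB i]
        exact mul_le_mul_of_nonneg_right
          (abs_mul_sub_mul_le_volume hσ hT hh hlip hw hθ hsupp (hI.1 i).2.1.le)
          (inv_nonneg.2 (hpos _ (by omega)).le)
    _ = T * ∑ m ∈ range n, B m * (lam (m + 1))⁻¹ := by rw [sum_range, mul_sum]
    _ ≤ T * (6 * ∑ k ∈ range K, (lam (k + 1))⁻¹) :=
        mul_le_mul_of_nonneg_left (sum_mul_le_of_antitone (antitone_inv_of_monotone hpos hmono)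
          (fun k => inv_nonneg.2 (hpos _ k.succ_pos).le) hB0 hB6 hBsum) hT0
    _ = 6 * (T * ∑ k ∈ range K, (lam (k + 1))⁻¹) := by ring

theorem sum_Icc_one_div_eq_sum_range (lam : ℕ → ℝ) (K : ℕ) :
    ∑ i ∈ Finset.Icc 1 K, 1 / lam i = ∑ k ∈ range K, (lam (k + 1))⁻¹ := by
  induction K with
  | zero => simp
  | succ K ih => rw [sum_Icc_succ_top (by omega), ih, sum_range_succ, one_div]

theorem tcoef_mul_sum_le_one (lam : ℕ → ℝ) (K : ℕ) :
    tcoef lam K * ∑ k ∈ range K, (lam (k + 1))⁻¹ ≤ 1 := by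
  rw [tcoef, sum_Icc_one_div_eq_sum_range]
  by_cases h : ∑ k ∈ range K, (lam (k + 1))⁻¹ = 0
  · simp [h]
  · rw [inv_mul_cancel₀ h]

theorem tcoef_nonneg {lam : ℕ → ℝ} (hpos : ∀ k, 1 ≤ k → 0 < lam k) (j : ℕ) :
    0 ≤ tcoef lam j :=
  inv_nonneg.2 (sum_nonneg fun i hi => (one_div_pos.2 (hpos i (mem_Icc.1 hi).1)).le)

theorem tcoef_anti {lam : ℕ → ℝ} (hpos : ∀ k, 1 ≤ k → 0 < lam k) {m n : ℕ} (hm : 1 ≤ m)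
    (hmn : m ≤ n) : tcoef lam n ≤ tcoef lam m := by
  have hpos' : ∀ i ∈ Finset.Icc 1 n, 0 < 1 / lam i := fun i hi => one_div_pos.2 (hpos i (mem_Icc.1 hi).1)
  refine inv_anti₀ (sum_pos (fun i hi => hpos' i (Icc_subset_Icc_right hmn hi))
    ⟨1, mem_Icc.2 ⟨le_rfl, hm⟩⟩) ?_
  exact sum_le_sum_of_subset_of_nonneg (Icc_subset_Icc_right hmn) fun i hi _ => (hpos' i hi).le

def cellStep (w : ℕ → ℝ) (s : Finset ℕ) (τ : ℕ → ℝ) (z : ℝ) : ℝ :=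
  ∑ j ∈ s, τ j * (Set.Ico (w j) (w (j + 1))).indicator 1 z

section CellStep

variable {w : ℕ → ℝ} {s : Finset ℕ} {τ : ℕ → ℝ}

theorem isConstBetweenNodes_cellStep : IsConstBetweenNodes w (cellStep w s τ) := by
  intro a b hab hw
  have hmem : ∀ j, a ∈ Set.Ico (w j) (w (j + 1)) ↔ b ∈ Set.Ico (w j) (w (j + 1)) := fun j => by
    have h₀ := hw j
    have h₁ := hw (j + 1)
    simp only [Set.mem_Ioc, not_and, not_le] at h₀ h₁
    simp only [Set.mem_Ico]
    constructor
    · exact fun ⟨h, h'⟩ => ⟨h.trans hab, h₁ h'⟩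
    · refine fun ⟨h, h'⟩ => ⟨?_, h'.trans_le' hab⟩
      by_contra! ha
      exact (h₀ ha).not_ge h
  simp only [cellStep, Set.indicator_apply, hmem, Pi.one_apply]

theorem cellStep_eq_of_mem (hw : Monotone w) {z : ℝ} {j₀ : ℕ}
    (hz : z ∈ Set.Ico (w j₀) (w (j₀ + 1))) : cellStep w s τ z = if j₀ ∈ s then τ j₀ else 0 := by
  have hcell : ∀ j, z ∈ Set.Ico (w j) (w (j + 1)) ↔ j = j₀ := fun j => by
    refine ⟨fun hj => le_antisymm ?_ ?_, fun h => h ▸ hz⟩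
    · by_contra! h
      exact (hz.2.trans_le ((hw h).trans hj.1)).false
    · by_contra! h
      exact (hj.2.trans_le ((hw h).trans hz.1)).false
  simp only [cellStep, Set.indicator_apply, hcell, Pi.one_apply, mul_ite, mul_one, mul_zero,
    sum_ite_eq']

theorem cellStep_eq_zero (hτ : ∀ j ∈ s, τ j = 0) (z : ℝ) : cellStep w s τ z = 0 :=
  sum_eq_zero fun j hj => by rw [hτ j hj, zero_mul]

theorem abs_cellStep_le (hw : Monotone w) {T : ℝ} (hτ : ∀ j, |τ j| ≤ T) (z : ℝ) :
    |cellStep w s τ z| ≤ T := by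
  by_cases hz : ∃ j, z ∈ Set.Ico (w j) (w (j + 1))
  · obtain ⟨j, hj⟩ := hz
    rw [cellStep_eq_of_mem hw hj]
    split_ifs
    exacts [hτ j, by simpa using (abs_nonneg _).trans (hτ j)]
  · push Not at hz
    simpa [cellStep, hz] using (abs_nonneg _).trans (hτ 0)

theorem exists_of_cellStep_ne_zero {z : ℝ} (hz : cellStep w s τ z ≠ 0) :
    ∃ j ∈ s, τ j ≠ 0 ∧ z ∈ Set.Ico (w j) (w (j + 1)) := by
  obtain ⟨j, hj, hne⟩ := exists_ne_zero_of_sum_ne_zero hz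
  by_cases hzj : z ∈ Set.Ico (w j) (w (j + 1))
  · exact ⟨j, hj, fun h => hne (by simp [h]), hzj⟩
  · simp [hzj] at hne

theorem mem_Icc_of_cellStep_ne_zero (hw : Monotone w) {m₁ m₂ : ℕ}
    (hτ : ∀ j ∈ s, τ j ≠ 0 → m₁ ≤ j ∧ j < m₂) {z : ℝ} (hz : cellStep w s τ z ≠ 0) :
    z ∈ Set.Icc (w m₁) (w m₂) := by
  obtain ⟨j, hj, hτj, hzj⟩ := exists_of_cellStep_ne_zero hz
  obtain ⟨h₁, h₂⟩ := hτ j hj hτj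
  exact ⟨(hw h₁).trans hzj.1, hzj.2.le.trans (hw h₂)⟩

end CellStep

def fNNode (γ : ℝ) (N k : ℕ) : ℝ := (Real.pi * k - γ * Real.pi / 2) / ((N : ℝ) + 1/2 - γ/2)

def fNWave (γ : ℝ) (N : ℕ) (z : ℝ) : ℝ := Real.sin (((N : ℝ) + 1/2 - γ/2) * z + γ * Real.pi / 2)

def fNCoef (lam : ℕ → ℝ) (N i j : ℕ) : ℝ :=
  if j < i ∧ i < 2 * j ∧ 1 < j ∧ 2 * j + 1 < N then tcoef lam j else 0

section Grid

variable {γ : ℝ} {N : ℕ}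

theorem fN_frequency_pos (hγ : γ < 1) : 0 < (N : ℝ) + 1/2 - γ/2 := by
  have := N.cast_nonneg (α := ℝ)
  linarith

theorem mul_fNNode_add (hγ : γ < 1) (k : ℕ) :
    ((N : ℝ) + 1/2 - γ/2) * fNNode γ N k + γ * Real.pi / 2 = k * Real.pi := by
  rw [fNNode, mul_div_cancel₀ _ (fN_frequency_pos hγ).ne']
  ring

theorem mul_fNNode_sub (hγ : γ < 1) (m k : ℕ) :
    ((N : ℝ) + 1/2 - γ/2) * (fNNode γ N m - fNNode γ N k) = Real.pi * (m - k) := by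
  linear_combination mul_fNNode_add hγ m - mul_fNNode_add (N := N) hγ k

theorem fNNode_monotone (hγ : γ < 1) : Monotone (fNNode γ N) := fun k m hkm => by
  have := mul_fNNode_sub (N := N) hγ m k
  have : (k : ℝ) ≤ m := Nat.cast_le.2 hkm
  nlinarith [fN_frequency_pos (N := N) hγ, Real.pi_pos]

theorem fNWave_fNNode (hγ : γ < 1) (k : ℕ) : fNWave γ N (fNNode γ N k) = 0 := by
  rw [fNWave, mul_fNNode_add hγ, Real.sin_nat_mul_pi]

theorem abs_fNWave_le_one (z : ℝ) : |fNWave γ N z| ≤ 1 := Real.abs_sin_le_one _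

theorem abs_fNWave_sub_le (hγ : γ < 1) (a b : ℝ) :
    |fNWave γ N b - fNWave γ N a| ≤ ((N : ℝ) + 1/2 - γ/2) * |b - a| := by
  refine (Real.abs_sin_sub_sin_le _ _).trans_eq ?_
  rw [add_sub_add_right_eq_sub, ← mul_sub, abs_mul, abs_of_pos (fN_frequency_pos hγ)]

end Grid

theorem abs_fNCoef_le {lam : ℕ → ℝ} (hpos : ∀ k, 1 ≤ k → 0 < lam k) (N i j : ℕ) :
    |fNCoef lam N i j| ≤ tcoef lam j := by
  unfold fNCoef
  split_ifs
  · exact (abs_of_nonneg (tcoef_nonneg hpos j)).le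
  · simpa using tcoef_nonneg hpos j

theorem of_fNCoef_ne_zero {lam : ℕ → ℝ} {N i j : ℕ} (h : fNCoef lam N i j ≠ 0) :
    j < i ∧ i < 2 * j ∧ 1 < j ∧ 2 * j + 1 < N := by
  by_contra hc
  exact h (if_neg hc)

theorem rectA_eq (α β : ℝ) (N i j : ℕ) :
    rectA α β N i j = Set.Ico (fNNode α N i) (fNNode α N (i + 1)) ×ˢ
      Set.Ico (fNNode β N j) (fNNode β N (j + 1)) := by
  simp only [rectA, fNNode]
  push_cast
  rfl

theorem fN_eq_sum (α β : ℝ) (lam : ℕ → ℝ) (N : ℕ) (x y : ℝ) :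
    fN α β lam N x y = ∑ i ∈ range N, ∑ j ∈ range N,
      fNCoef lam N i j * (Set.Ico (fNNode α N i) (fNNode α N (i + 1))).indicator 1 x *
        (Set.Ico (fNNode β N j) (fNNode β N (j + 1))).indicator 1 y *
        fNWave α N x * fNWave β N y := by
  refine sum_congr rfl fun i _ => sum_congr rfl fun j _ => ?_
  rw [fNCoef, rectA_eq, ← Pi.one_def, Set.indicator_prod_one, fNWave, fNWave]
  split_ifs <;> ring

theorem fN_eq_cellStep_left (α β : ℝ) (lam : ℕ → ℝ) (N : ℕ) (x y : ℝ) :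
    fN α β lam N x y = cellStep (fNNode α N) (range N)
      (fun i => cellStep (fNNode β N) (range N) (fNCoef lam N i) y) x * fNWave β N y *
        fNWave α N x := by
  simp only [fN_eq_sum, cellStep, sum_mul]
  refine sum_congr rfl fun i _ => sum_congr rfl fun j _ => ?_
  ring

theorem fN_eq_cellStep_right (α β : ℝ) (lam : ℕ → ℝ) (N : ℕ) (x y : ℝ) :
    fN α β lam N x y = cellStep (fNNode β N) (range N)
      (fun j => cellStep (fNNode α N) (range N) (fun i => fNCoef lam N i j) x) y *
        fNWave α N x * fNWave β N y := by
  simp only [fN_eq_sum, cellStep, sum_mul]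
  rw [sum_comm]

theorem sum_cellStep_mul_fNWave_div_le {γ : ℝ} (hγ : γ < 1) {lam : ℕ → ℝ}
    (hpos : ∀ k, 1 ≤ k → 0 < lam k) (hmono : ∀ k, 1 ≤ k → lam k ≤ lam (k + 1))
    {N : ℕ} {τ : ℕ → ℝ} {c : ℝ} (hc : |c| ≤ 1) {K m₁ m₂ : ℕ}
    (hτ : ∀ i, |τ i| ≤ tcoef lam K) (hsupp : ∀ i ∈ range N, τ i ≠ 0 → m₁ ≤ i ∧ i < m₂)
    (hlen : Real.pi * ((m₂ : ℝ) - m₁) + 4 ≤ 6 * K) {n : ℕ} {I : Fin n → ℝ × ℝ}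
    (hI : Nonoverlapping n I) :
    ∑ i : Fin n, |cellStep (fNNode γ N) (range N) τ (I i).2 * c * fNWave γ N (I i).2 -
      cellStep (fNNode γ N) (range N) τ (I i).1 * c * fNWave γ N (I i).1| / lam (i + 1) ≤ 6 := by
  have hw := fNNode_monotone (N := N) hγ
  refine (sum_abs_mul_sub_mul_div_le (σ := fun z => cellStep (fNNode γ N) (range N) τ z * c)
    (T := tcoef lam K) (s := fNNode γ N m₁) (e := fNNode γ N m₂) hpos hmono
    (isConstBetweenNodes_cellStep.mul_const c) (fun z => ?_) abs_fNWave_le_one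
    (abs_fNWave_sub_le hγ) (fNWave_fNNode hγ) (fN_frequency_pos hγ)
    (fun z hz => mem_Icc_of_cellStep_ne_zero hw hsupp (left_ne_zero_of_mul hz))
    (by rwa [mul_fNNode_sub hγ]) hI).trans ?_
  · rw [abs_mul]
    simpa using mul_le_mul (abs_cellStep_le hw hτ z) hc (abs_nonneg _) (tcoef_nonneg hpos K)
  · linarith [tcoef_mul_sum_le_one lam K]

theorem V1sums_fN_le {α β : ℝ} (hα : α < 1) (hβ : β < 1) {lam : ℕ → ℝ}
    (hpos : ∀ k, 1 ≤ k → 0 < lam k) (hmono : ∀ k, 1 ≤ k → lam k ≤ lam (k + 1)) (N : ℕ) :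
    ∀ v ∈ V1sums lam (fN α β lam N), v ≤ 6 := by
  rintro v ⟨y, n, I, hI, rfl⟩
  simp only [fN_eq_cellStep_left]
  set τ := fun i => cellStep (fNNode β N) (range N) (fNCoef lam N i) y
  by_cases hτ0 : ∀ i ∈ range N, τ i = 0
  · simp [cellStep_eq_zero hτ0]
  push Not at hτ0
  obtain ⟨i, -, hτi⟩ := hτ0
  -- the horizontal line through `y` meets a rectangle `A_{i, j₀}` of the support
  obtain ⟨j₀, hj₀, hcoef, hy⟩ := exists_of_cellStep_ne_zero hτi
  have hj₀2 := (of_fNCoef_ne_zero hcoef).2.2.1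
  have hτ : ∀ i, τ i = fNCoef lam N i j₀ := fun i => by
    simp only [τ, cellStep_eq_of_mem (fNNode_monotone hβ) hy, if_pos hj₀]
  refine sum_cellStep_mul_fNWave_div_le hα hpos hmono (abs_fNWave_le_one y) (K := j₀)
    (m₁ := j₀ + 1) (m₂ := 2 * j₀) (fun i => hτ i ▸ abs_fNCoef_le hpos N i j₀)
    (fun i _ h => ?_) ?_ hI
  · have := of_fNCoef_ne_zero (hτ i ▸ h)
    omega
  · have : (2 : ℝ) ≤ j₀ := by exact_mod_cast hj₀2
    push_cast
    nlinarith [Real.pi_le_four, Real.pi_pos]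

theorem V2sums_fN_le {α β : ℝ} (hα : α < 1) (hβ : β < 1) {lam : ℕ → ℝ}
    (hpos : ∀ k, 1 ≤ k → 0 < lam k) (hmono : ∀ k, 1 ≤ k → lam k ≤ lam (k + 1)) (N : ℕ) :
    ∀ v ∈ V2sums lam (fN α β lam N), v ≤ 6 := by
  rintro v ⟨x, n, J, hJ, rfl⟩
  simp only [fN_eq_cellStep_right]
  set τ := fun j => cellStep (fNNode α N) (range N) (fun i => fNCoef lam N i j) x
  by_cases hτ0 : ∀ j ∈ range N, τ j = 0
  · simp [cellStep_eq_zero hτ0]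
  push Not at hτ0
  obtain ⟨j, -, hτj⟩ := hτ0
  -- the vertical line through `x` meets a rectangle `A_{i₀, j}` of the support
  obtain ⟨i₀, hi₀, hcoef, hx⟩ := exists_of_cellStep_ne_zero hτj
  have hτ : ∀ j, τ j = fNCoef lam N i₀ j := fun j => by
    simp only [τ, cellStep_eq_of_mem (fNNode_monotone hα) hx, if_pos hi₀]
  have hbound : ∀ j, |fNCoef lam N i₀ j| ≤ tcoef lam (i₀ / 2 + 1) := fun j => by
    by_cases h : fNCoef lam N i₀ j = 0
    · simpa [h] using tcoef_nonneg hpos (i₀ / 2 + 1)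
    · have := of_fNCoef_ne_zero h
      exact (abs_fNCoef_le hpos N i₀ j).trans (tcoef_anti hpos (by omega) (by omega))
  refine sum_cellStep_mul_fNWave_div_le hβ hpos hmono (abs_fNWave_le_one x) (K := i₀ / 2 + 1)
    (m₁ := i₀ / 2 + 1) (m₂ := i₀) (fun j => hτ j ▸ hbound j) (fun j _ h => ?_) ?_ hJ
  · have := of_fNCoef_ne_zero (hτ j ▸ h)
    omega
  · have h₁ : ((i₀ : ℕ) : ℝ) + 1 ≤ 2 * ((i₀ / 2 + 1 : ℕ) : ℝ) := by exact_mod_cast (by omega)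
    have h₂ : (1 : ℝ) ≤ ((i₀ / 2 + 1 : ℕ) : ℝ) := by exact_mod_cast (by omega)
    nlinarith [Real.pi_le_four, Real.pi_pos]

theorem fN_partial_variation_bounded_general
    (α β : ℝ) (hα1 : α < 1) (hβ1 : β < 1)
    (lam : ℕ → ℝ)
    (hlam_pos : ∀ k, 1 ≤ k → 0 < lam k)
    (hlam_mono : ∀ k, 1 ≤ k → lam k ≤ lam (k + 1)) :
    ∃ c : ℝ, 0 < c ∧ ∀ N : ℕ, 5 ≤ N →
      (∀ v ∈ V1sums lam (fN α β lam N), v ≤ c) ∧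
      (∀ v ∈ V2sums lam (fN α β lam N), v ≤ c) ∧
      PLambdaBV lam (fN α β lam N) := by
  refine ⟨6, by norm_num, fun N _ => ?_⟩
  have h₁ := V1sums_fN_le hα1 hβ1 hlam_pos hlam_mono N
  have h₂ := V2sums_fN_le hα1 hβ1 hlam_pos hlam_mono N
  exact ⟨h₁, h₂, ⟨6, h₁⟩, ⟨6, h₂⟩⟩

/-- **Estimates (30), (31) of Goginava–Sahakian.**
The functions `f_N` from the counterexample construction have partial `Λ`-variations
bounded by a constant `c` independent of `N`; in particular `f_N ∈ PΛBV` uniformly. -/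
theorem fN_partial_variation_bounded
    (α β : ℝ) (hα0 : 0 < α) (hα1 : α < 1) (hβ0 : 0 < β) (hβ1 : β < 1)
    (hαβ : α + β < 1)
    (lam : ℕ → ℝ)
    (hlam_pos : ∀ k, 1 ≤ k → 0 < lam k)
    (hlam1 : 1 < lam 1)
    (hlam_mono : ∀ k, 1 ≤ k → lam k ≤ lam (k + 1))
    (hlam_top : Tendsto lam atTop atTop)
    (hdec : ∀ k, 1 ≤ k →
      lam (k + 1) / ((k : ℝ) + 1) ^ (1 - (α + β)) ≤ lam k / (k : ℝ) ^ (1 - (α + β)))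
    (hzero : Tendsto (fun k : ℕ => lam k / (k : ℝ) ^ (1 - (α + β))) atTop (nhds 0)) :
    ∃ c : ℝ, 0 < c ∧ ∀ N : ℕ, 5 ≤ N →
      (∀ v ∈ V1sums lam (fN α β lam N), v ≤ c) ∧
      (∀ v ∈ V2sums lam (fN α β lam N), v ≤ c) ∧
      PLambdaBV lam (fN α β lam N) :=
  fN_partial_variation_bounded_general α β hα1 hβ1 lam hlam_pos hlam_mono

end
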